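/- If ν is a multiplicative arithmetic function, then supp(ν) has positive asymptotic density if and only if ∑_{p prime, ν(p)=0} 1/p < ∞. -/

import Mathlib

open Filter Topology ArithmeticFunction

/-- Number of elements of `A` in `[1, N]`. -/
noncomputable def cnt (A : Set ℕ) (N : ℕ) : ℕ := (A ∩ Set.Icc 1 N).ncard

/-- `A ⊆ ℕ` has asymptotic density `d`. -/
def HasDensity (A : Set ℕ) (d : ℝ) : Prop :=
  Filter.Tendsto (fun N : ℕ => (cnt A N : ℝ) / N) Filter.atTop (nhds d)

/-- `A` is thin: the sum of the reciprocals of its elements converges. -/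
def Thin (A : Set ℕ) : Prop := Summable (fun a : A => (1 : ℝ) / a)

/-!
Write `S` for the support of `ν`. By multiplicativity, `n ∈ S` iff `ν (p ^ vₚ(n)) ≠ 0` for every
prime `p`. Imposing this only for primes `p < x` and exponents `vₚ(n) ≤ K` gives a set that is
periodic modulo `∏ p ^ (K + 1)`, so by the Chinese remainder theorem its density is a product of
local densities.

If `S` has density `d > 0`: for `ν p = 0`, `n ∈ S` forces `p ∤ n` or `p² ∣ n`, so over any finite
set of such primes `d ≤ ∏ (1 - 1/(2p)) ≤ exp (-∑ 1/(2p))`, which bounds their reciprocal sum.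

Conversely, a number whose `p`-part lies outside `S` is a multiple of `p` if `ν p = 0` and of `p²`
otherwise, and the reciprocals of these moduli have a convergent sum `W`. Hence every local density
is at least `1 - 1/modulus`, the truncated densities stay above `exp (-2W)`, and the truncated sets
differ from `S` only in multiples of `p ^ (K + 1)` (`p < x`) or of the modulus (`p ≥ x`), a set of
small relative size. So `cnt S N / N` is Cauchy with limit at least `exp (-2W)`.
-/

namespace Nat

variable {P Q : ℕ → Prop} [DecidablePred P] [DecidablePred Q] {M : ℕ}

theorem count_mul_of_periodic (hP : Function.Periodic P M) (q : ℕ) :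
    count P (q * M) = q * count P M := by
  induction q with
  | zero => simp
  | succ q ih =>
    have hshift : (fun k => P (q * M + k)) = P := funext fun k => by
      rw [add_comm]; exact hP.nat_mul q k
    rw [add_mul, one_mul, count_add, ih, add_mul, one_mul]
    simp only [hshift]

theorem abs_count_sub_le_of_periodic (hP : Function.Periodic P M) (hM : 0 < M) (n : ℕ) :
    |(count P n : ℝ) - n * count P M / M| ≤ M := by
  set q := n / M
  have hlo : count P (q * M) ≤ count P n := count_monotone P (Nat.div_mul_le_self n M)
  have hhi : count P n ≤ count P ((q + 1) * M) :=
    count_monotone P (Nat.lt_mul_of_div_lt (Nat.lt_succ_self q) hM).le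
  rw [count_mul_of_periodic hP] at hlo hhi
  have hqn : (q * M : ℝ) ≤ n := by exact_mod_cast Nat.div_mul_le_self n M
  have hnq : (n : ℝ) < (q + 1) * M := by
    exact_mod_cast Nat.lt_mul_of_div_lt (Nat.lt_succ_self q) hM
  have hcM : (count P M : ℝ) ≤ M := by exact_mod_cast count_le P
  have hMpos : (0 : ℝ) < M := by exact_mod_cast hM
  have h1 : (q : ℝ) * count P M ≤ n * count P M / M := by
    rw [le_div_iff₀ hMpos]; nlinarith [(count P M).cast_nonneg (α := ℝ)]
  have h2 : (n : ℝ) * count P M / M ≤ (q + 1) * count P M := by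
    rw [div_le_iff₀ hMpos]; nlinarith [(count P M).cast_nonneg (α := ℝ)]
  have h3 : (q : ℝ) * count P M ≤ count P n := by exact_mod_cast hlo
  have h4 : (count P n : ℝ) ≤ (q + 1) * count P M := by exact_mod_cast hhi
  rw [abs_le]; constructor <;> nlinarith

theorem count_add_count_not (n : ℕ) : count P n + count (fun k => ¬P k) n = n := by
  simp only [count_eq_card_filter_range]
  rw [Finset.card_filter_add_card_filter_not, Finset.card_range]

theorem count_or_le (n : ℕ) : count (fun k => P k ∨ Q k) n ≤ count P n + count Q n := by
  simp only [count_eq_card_filter_range, Finset.filter_or]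
  exact Finset.card_union_le _ _

theorem count_dvd_mul {d : ℕ} (hd : 0 < d) (q : ℕ) : count (d ∣ ·) (q * d) = q := by
  have h := count_modEq_card (q * d) hd 0
  simp only [Nat.mul_mod_left, Nat.zero_mod, lt_irrefl, if_false, add_zero,
    Nat.mul_div_cancel _ hd] at h
  simpa only [Nat.modEq_zero_iff_dvd] using h

open scoped Count in
theorem count_eq_card_zmod (P : ℕ → Prop) [DecidablePred P] (M : ℕ) [NeZero M] :
    count P M = Nat.card {x : ZMod M // P x.val} := by
  rw [count_eq_card_fintype, ← Nat.card_eq_fintype_card]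
  exact Nat.card_congr
    { toFun := fun k => ⟨k.1, by rw [ZMod.val_natCast, Nat.mod_eq_of_lt k.2.1]; exact k.2.2⟩
      invFun := fun x => ⟨x.1.val, x.1.val_lt, x.2⟩
      left_inv := fun k => by ext; simp [ZMod.val_natCast, Nat.mod_eq_of_lt k.2.1]
      right_inv := fun x => by ext; simp }

open scoped Function in
theorem count_forall_of_periodic {ι : Type*} [Fintype ι] (m : ι → ℕ) (hm0 : ∀ i, m i ≠ 0)
    (hm : Pairwise (Coprime on m)) (Q : ι → ℕ → Prop) [∀ i, DecidablePred (Q i)]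
    (hQ : ∀ i, Function.Periodic (Q i) (m i)) :
    count (fun n => ∀ i, Q i n) (∏ i, m i) = ∏ i, count (Q i) (m i) := by
  have : ∀ i, NeZero (m i) := fun i => ⟨hm0 i⟩
  have : NeZero (∏ i, m i) := ⟨Finset.prod_ne_zero_iff.mpr fun i _ => hm0 i⟩
  simp only [count_eq_card_zmod]
  rw [← Nat.card_pi]
  refine Nat.card_congr (((ZMod.prodEquivPi m hm).toEquiv.subtypeEquiv fun x => ?_).trans
    (Equiv.subtypePiEquivPi (p := fun i (y : ZMod (m i)) => Q i y.val)))
  simp only [RingEquiv.toEquiv_eq_coe, EquivLike.coe_coe, ZMod.prodEquivPi_apply,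
    ZMod.castHom_apply, ZMod.cast_eq_val, ZMod.val_natCast, (hQ _).map_mod_nat]

end Nat

theorem cnt_eq_count (A : Set ℕ) [DecidablePred (· ∈ A)] (N : ℕ) :
    cnt A N = Nat.count (fun k => k + 1 ∈ A) N := by
  have : A ∩ Set.Icc 1 N = (· + 1) '' {k | k < N ∧ k + 1 ∈ A} := by
    ext n
    constructor
    · rintro ⟨hA, h1, hN⟩
      exact ⟨n - 1, ⟨by omega, by rwa [Nat.sub_add_cancel h1]⟩, Nat.sub_add_cancel h1⟩
    · rintro ⟨k, ⟨hk, hA⟩, rfl⟩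
      dsimp only
      exact ⟨hA, by omega, by omega⟩
  rw [cnt, this, Set.ncard_image_of_injective _ (add_left_injective 1),
    Nat.count_eq_card_filter_range, ← Set.ncard_coe_finset]
  congr 1
  ext k
  simp

theorem abs_cnt_sub_count_le (A : Set ℕ) [DecidablePred (· ∈ A)] (N : ℕ) :
    |(cnt A N : ℝ) - Nat.count (· ∈ A) N| ≤ 1 := by
  have h1 := Nat.count_succ' (· ∈ A) N
  have h2 := Nat.count_succ (· ∈ A) N
  rw [← cnt_eq_count] at h1
  have hle : Nat.count (· ∈ A) N ≤ cnt A N + 1 := by split_ifs at h1 h2 <;> omega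
  have hge : cnt A N ≤ Nat.count (· ∈ A) N + 1 := by split_ifs at h1 h2 <;> omega
  have hle' : (Nat.count (· ∈ A) N : ℝ) ≤ cnt A N + 1 := by exact_mod_cast hle
  have hge' : (cnt A N : ℝ) ≤ Nat.count (· ∈ A) N + 1 := by exact_mod_cast hge
  rw [abs_le]
  constructor <;> linarith

theorem hasDensity_of_periodic {P : ℕ → Prop} [DecidablePred P] {M : ℕ}
    (hP : Function.Periodic P M) (hM : 0 < M) :
    HasDensity {n | P n} (Nat.count P M / M) := by
  have hbound : ∀ N : ℕ, |(cnt {n | P n} N : ℝ) - N * (Nat.count P M / M)| ≤ M + 1 := by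
    intro N
    have h1 : |(cnt {n | P n} N : ℝ) - Nat.count P N| ≤ 1 := abs_cnt_sub_count_le {n | P n} N
    have h2 := Nat.abs_count_sub_le_of_periodic hP hM N
    rw [mul_div_assoc']
    calc _ ≤ |(cnt {n | P n} N : ℝ) - Nat.count P N|
          + |(Nat.count P N : ℝ) - N * Nat.count P M / M| := abs_sub_le _ _ _
      _ ≤ M + 1 := by linarith
  rw [HasDensity, tendsto_iff_norm_sub_tendsto_zero]
  refine squeeze_zero' (Eventually.of_forall fun _ => norm_nonneg _) ?_
    (tendsto_const_div_atTop_nhds_zero_nat ((M : ℝ) + 1))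
  filter_upwards [eventually_gt_atTop 0] with N hN
  have hN' : (0 : ℝ) < N := by exact_mod_cast hN
  rw [Real.norm_eq_abs, le_div_iff₀ hN', ← abs_of_pos hN', ← abs_mul, abs_of_pos hN', sub_mul,
    div_mul_cancel₀ _ hN'.ne', mul_comm]
  exact hbound N

theorem cnt_mono {A B : Set ℕ} (h : A ⊆ B) (N : ℕ) : cnt A N ≤ cnt B N :=
  Set.ncard_le_ncard (Set.inter_subset_inter_left _ h) ((Set.finite_Icc 1 N).inter_of_right B)

theorem HasDensity.le_of_subset {A B : Set ℕ} {a b : ℝ} (hA : HasDensity A a)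
    (hB : HasDensity B b) (h : A ⊆ B) : a ≤ b :=
  le_of_tendsto_of_tendsto' hA hB fun N => by gcongr; exact_mod_cast cnt_mono h N

theorem cnt_le_cnt_add_cnt_diff (A B : Set ℕ) (N : ℕ) : cnt B N ≤ cnt A N + cnt (B \ A) N := by
  unfold cnt
  calc (B ∩ Set.Icc 1 N).ncard ≤ (A ∩ Set.Icc 1 N ∪ (B \ A) ∩ Set.Icc 1 N).ncard :=
        Set.ncard_le_ncard (by intro n hn; by_cases hA : n ∈ A <;> aesop)
          (((Set.finite_Icc 1 N).inter_of_right A).union ((Set.finite_Icc 1 N).inter_of_right _))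
    _ ≤ _ := Set.ncard_union_le _ _

theorem cnt_le_of_forall_exists_dvd {ι : Type*} (A : Set ℕ) (N : ℕ) (s : Finset ι) (d : ι → ℕ)
    (h : ∀ n ∈ A, 1 ≤ n → n ≤ N → ∃ i ∈ s, d i ∣ n) :
    (cnt A N : ℝ) ≤ N * ∑ i ∈ s, (1 : ℝ) / d i := by
  classical
  have hsub : A ∩ Set.Icc 1 N ⊆ ↑(s.biUnion fun i => {n ∈ Finset.Icc 1 N | d i ∣ n}) := by
    rintro n ⟨hA, h1, hN⟩
    obtain ⟨i, hi, hd⟩ := h n hA h1 hN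
    simp only [Finset.coe_biUnion, Finset.coe_filter, Set.mem_iUnion]
    exact ⟨i, hi, by simp [h1, hN, hd]⟩
  have hcard : cnt A N ≤ ∑ i ∈ s, N / d i := by
    refine (Set.ncard_le_ncard hsub (Finset.finite_toSet _)).trans ?_
    rw [Set.ncard_coe_finset]
    refine Finset.card_biUnion_le.trans (Finset.sum_le_sum fun i _ => ?_)
    exact (Nat.Ioc_filter_dvd_card_eq_div N (d i)).le
  calc (cnt A N : ℝ) ≤ ∑ i ∈ s, ((N / d i : ℕ) : ℝ) := by exact_mod_cast hcard
    _ ≤ ∑ i ∈ s, (N : ℝ) / d i := Finset.sum_le_sum fun i _ => Nat.cast_div_le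
    _ = N * ∑ i ∈ s, (1 : ℝ) / d i := by rw [Finset.mul_sum]; simp [div_eq_mul_inv]

theorem exists_tendsto_of_forall_approx (u : ℕ → ℝ) (c : ℝ)
    (h : ∀ ε > 0, ∃ ρ, c ≤ ρ ∧ ∀ᶠ N in atTop, |u N - ρ| ≤ ε) :
    ∃ d, c ≤ d ∧ Tendsto u atTop (𝓝 d) := by
  have hcauchy : CauchySeq u := by
    rw [Metric.cauchySeq_iff']
    intro ε hε
    obtain ⟨ρ, -, hρ⟩ := h (ε / 3) (by positivity)
    obtain ⟨N₀, hN₀⟩ := eventually_atTop.mp hρ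
    refine ⟨N₀, fun N hN => ?_⟩
    rw [Real.dist_eq]
    obtain ⟨h1, h2⟩ := abs_le.mp (hN₀ N hN)
    obtain ⟨h3, h4⟩ := abs_le.mp (hN₀ N₀ le_rfl)
    rw [abs_sub_lt_iff]
    constructor <;> linarith
  obtain ⟨d, hd⟩ := cauchySeq_tendsto_of_complete hcauchy
  refine ⟨d, le_of_forall_pos_lt_add fun ε hε => ?_, hd⟩
  obtain ⟨ρ, hcρ, hρ⟩ := h (ε / 2) (by positivity)
  have : ρ - ε / 2 ≤ d := ge_of_tendsto hd (hρ.mono fun N hN => by linarith [(abs_le.mp hN).1])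
  linarith

theorem Real.exp_neg_two_mul_le_one_sub {a : ℝ} (h0 : 0 ≤ a) (h : a ≤ 1 / 2) :
    Real.exp (-(2 * a)) ≤ 1 - a := by
  rw [Real.exp_neg, inv_le_iff_one_le_mul₀ (Real.exp_pos _)]
  nlinarith [Real.add_one_le_exp (2 * a)]

theorem sum_le_tsum_sub_sum_range {f : ℕ → ℝ} (hf : Summable f) (hf0 : 0 ≤ f) {s : Finset ℕ}
    {x : ℕ} (hs : ∀ i ∈ s, x ≤ i) :
    ∑ i ∈ s, f i ≤ ∑' i, f i - ∑ i ∈ Finset.range x, f i := by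
  have hdisj : Disjoint s (Finset.range x) :=
    Finset.disjoint_left.mpr fun i hi hi' => by
      have := hs i hi
      rw [Finset.mem_range] at hi'
      omega
  have := hf.sum_le_tsum (s ∪ Finset.range x) fun i _ => hf0 i
  rw [Finset.sum_union hdisj] at this
  linarith

theorem sum_one_div_pow_le_of_subset_Ico {s : Finset ℕ} {x : ℕ} (hs : s ⊆ Finset.Ico 2 x)
    (e : ℕ) : ∑ p ∈ s, 1 / (p : ℝ) ^ e ≤ x * (1 / 2) ^ e := by
  calc ∑ p ∈ s, 1 / (p : ℝ) ^ e ≤ ∑ p ∈ s, (1 / 2 : ℝ) ^ e := by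
        refine Finset.sum_le_sum fun p hp => ?_
        have h2 : (2 : ℝ) ≤ p := by exact_mod_cast (Finset.mem_Ico.mp (hs hp)).1
        rw [one_div_pow]
        gcongr
    _ ≤ x * (1 / 2) ^ e := by
        rw [Finset.sum_const, nsmul_eq_mul]
        gcongr
        exact (Finset.card_le_card hs).trans (by simp)

namespace ArithmeticFunction

section LocalSupport

variable {R : Type*} [Zero R] (ν : ArithmeticFunction R)

/-- The `p`-part `p ^ k` of `n` lies in the support of `ν`, unless `k > K`. Leaving large
exponents unconstrained makes the condition periodic modulo `p ^ (K + 1)`. -/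
def InLocalSupport (p K n : ℕ) : Prop :=
  ∀ k ≤ K, p ^ k ∣ n → ¬p ^ (k + 1) ∣ n → ν (p ^ k) ≠ 0

open Classical in
noncomputable def localDensity (p K : ℕ) : ℝ :=
  Nat.count (InLocalSupport ν p K) (p ^ (K + 1)) / (p : ℝ) ^ (K + 1)

open Classical in
noncomputable def badModulus (p : ℕ) : ℕ :=
  if ν p = 0 then p else p ^ 2

open Classical in
noncomputable def badDensity (p : ℕ) : ℝ :=
  if p.Prime then 1 / badModulus ν p else 0

theorem inLocalSupport_periodic (p K : ℕ) :
    Function.Periodic (InLocalSupport ν p K) (p ^ (K + 1)) := by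
  intro n
  refine propext (forall₂_congr fun k hk => ?_)
  rw [Nat.dvd_add_left (pow_dvd_pow p (by omega)), Nat.dvd_add_left (pow_dvd_pow p (by omega))]

theorem hasDensity_sifted {s : Finset ℕ} (hs : ∀ p ∈ s, p.Prime) (K : ℕ) :
    HasDensity {n | ∀ p ∈ s, InLocalSupport ν p K n} (∏ p ∈ s, localDensity ν p K) := by
  classical
  have hcrt := Nat.count_forall_of_periodic (fun p : s => (p : ℕ) ^ (K + 1))
    (fun p => pow_ne_zero _ (hs p p.2).ne_zero)
    (fun p q hpq => Nat.Coprime.pow _ _ ((Nat.coprime_primes (hs p p.2) (hs q q.2)).mpr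
      (Subtype.coe_injective.ne hpq)))
    (fun p => InLocalSupport ν p K) (fun p => inLocalSupport_periodic ν p K)
  simp only [Finset.prod_coe_sort s (fun p => p ^ (K + 1)),
    Finset.prod_coe_sort s (fun p => Nat.count (InLocalSupport ν p K) (p ^ (K + 1))),
    Subtype.forall] at hcrt
  have hperiodic : Function.Periodic (fun n => ∀ p ∈ s, InLocalSupport ν p K n)
      (∏ p ∈ s, p ^ (K + 1)) := by
    intro n
    refine propext (forall₂_congr fun p hp => ?_)
    obtain ⟨r, hr⟩ := Finset.dvd_prod_of_mem (fun p => p ^ (K + 1)) hp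
    rw [hr, mul_comm]
    simpa using (inLocalSupport_periodic ν p K).nat_mul r n
  have h := hasDensity_of_periodic hperiodic
    (Finset.prod_pos fun p hp => pow_pos (hs p hp).pos _)
  rw [hcrt, Nat.cast_prod, Nat.cast_prod, ← Finset.prod_div_distrib] at h
  simpa [localDensity] using h

theorem localDensity_one_le {p : ℕ} (hp : p.Prime) (h0 : ν p = 0) :
    localDensity ν p 1 ≤ 1 - 1 / (2 * p) := by
  classical
  have hcover : ∀ n, p ∣ n → ¬InLocalSupport ν p 1 n ∨ p ^ 2 ∣ n := by
    refine fun n hn => or_iff_not_imp_right.mpr fun h2 hloc => ?_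
    exact hloc 1 le_rfl (by simpa using hn) h2 (by simpa using h0)
  have hcount : p ≤ Nat.count (fun n => ¬InLocalSupport ν p 1 n) (p ^ 2) + 1 := by
    calc p = Nat.count (p ∣ ·) (p ^ 2) := by rw [sq, Nat.count_dvd_mul hp.pos]
      _ ≤ Nat.count (fun n => ¬InLocalSupport ν p 1 n ∨ p ^ 2 ∣ n) (p ^ 2) :=
          Nat.count_mono_left fun n _ => hcover n
      _ ≤ _ := Nat.count_or_le _
      _ = _ := by simpa using Nat.count_dvd_mul (pow_pos hp.pos 2) 1
  have hsum := Nat.count_add_count_not (P := InLocalSupport ν p 1) (p ^ 2)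
  have hle : (Nat.count (InLocalSupport ν p 1) (p ^ 2) : ℝ) ≤ (p : ℝ) ^ 2 - p + 1 := by
    have : Nat.count (InLocalSupport ν p 1) (p ^ 2) + p ≤ p ^ 2 + 1 := by omega
    have : (Nat.count (InLocalSupport ν p 1) (p ^ 2) : ℝ) + p ≤ (p : ℝ) ^ 2 + 1 := by
      exact_mod_cast this
    linarith
  have hp2 : (2 : ℝ) ≤ p := by exact_mod_cast hp.two_le
  rw [localDensity, div_le_iff₀ (by positivity)]
  calc _ ≤ (p : ℝ) ^ 2 - p + 1 := hle
    _ ≤ (p : ℝ) ^ 2 - p / 2 := by nlinarith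
    _ = (1 - 1 / (2 * p)) * (p : ℝ) ^ (1 + 1) := by field_simp; ring

theorem badDensity_nonneg : 0 ≤ badDensity ν := fun p => by
  unfold badDensity; split_ifs <;> positivity

theorem badDensity_le_half (p : ℕ) : badDensity ν p ≤ 1 / 2 := by
  unfold badDensity badModulus
  split_ifs with hp h0
  · have : (2 : ℝ) ≤ p := by exact_mod_cast hp.two_le
    gcongr
  · have : (2 : ℝ) ≤ p := by exact_mod_cast hp.two_le
    push_cast
    gcongr
    nlinarith
  · norm_num

theorem summable_badDensity
    (hsum : Summable fun p : {p : ℕ // p.Prime ∧ ν p = 0} => (1 : ℝ) / (p : ℕ)) :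
    Summable (badDensity ν) := by
  have h1 : Summable ({p | p.Prime ∧ ν p = 0}.indicator fun p : ℕ => (1 : ℝ) / p) :=
    summable_subtype_iff_indicator.mp hsum
  have h2 : Summable fun p : ℕ => (1 : ℝ) / (p : ℝ) ^ 2 :=
    Real.summable_one_div_nat_pow.mpr one_lt_two
  refine (h1.add h2).of_nonneg_of_le (badDensity_nonneg ν) fun p => ?_
  unfold badDensity badModulus
  by_cases hp : p.Prime <;> by_cases h0 : ν p = 0 <;> simp [Set.indicator, hp, h0]

end LocalSupport

section Multiplicative

variable {R : Type*} [CommMonoidWithZero R] [Nontrivial R] {ν : ArithmeticFunction R}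

theorem IsMultiplicative.badModulus_dvd (hν : ν.IsMultiplicative) {p k n : ℕ}
    (hk : ν (p ^ k) = 0) (hdvd : p ^ k ∣ n) : badModulus ν p ∣ n := by
  have hk0 : k ≠ 0 := by rintro rfl; simp [hν.map_one] at hk
  refine dvd_trans ?_ hdvd
  unfold badModulus
  split_ifs with hp
  · exact dvd_pow_self p hk0
  · have hk1 : k ≠ 1 := by rintro rfl; exact hp (by simpa using hk)
    exact pow_dvd_pow p (by omega)

theorem IsMultiplicative.one_sub_badDensity_le_localDensity (hν : ν.IsMultiplicative)
    {p K : ℕ} (hp : p.Prime) (hK : 1 ≤ K) : 1 - badDensity ν p ≤ localDensity ν p K := by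
  classical
  have hbm : badModulus ν p ∣ p ^ (K + 1) := by
    unfold badModulus
    split_ifs
    · exact dvd_pow_self p (by omega)
    · exact pow_dvd_pow p (by omega)
  obtain ⟨r, hr⟩ := hbm
  have hbm0 : 0 < badModulus ν p := Nat.pos_of_dvd_of_pos ⟨r, hr⟩ (pow_pos hp.pos _)
  have hcover : ∀ n, InLocalSupport ν p K n ∨ badModulus ν p ∣ n := by
    refine fun n => or_iff_not_imp_left.mpr fun h => ?_
    simp only [InLocalSupport, not_forall, not_not] at h
    obtain ⟨k, -, hdvd, -, hk⟩ := h
    exact hν.badModulus_dvd hk hdvd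
  have hcount : p ^ (K + 1) ≤ Nat.count (InLocalSupport ν p K) (p ^ (K + 1)) + r := by
    calc p ^ (K + 1) = Nat.count (fun n => InLocalSupport ν p K n ∨ badModulus ν p ∣ n)
          (p ^ (K + 1)) := (Nat.count_of_forall fun n _ => hcover n).symm
      _ ≤ _ := Nat.count_or_le _
      _ = _ := by rw [hr, mul_comm, Nat.count_dvd_mul hbm0]
  have hpK : (0 : ℝ) < (p : ℝ) ^ (K + 1) := by have := hp.pos; positivity
  have hr' : (p : ℝ) ^ (K + 1) = badModulus ν p * r := by exact_mod_cast hr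
  rw [localDensity, badDensity, if_pos hp, le_div_iff₀ hpK, sub_mul, one_mul, hr', one_div,
    inv_mul_cancel_left₀ (by exact_mod_cast hbm0.ne'), ← hr']
  have : ((p ^ (K + 1) : ℕ) : ℝ) ≤ Nat.count (InLocalSupport ν p K) (p ^ (K + 1)) + r := by
    exact_mod_cast hcount
  push_cast at this
  linarith

theorem IsMultiplicative.exp_le_prod_localDensity (hν : ν.IsMultiplicative)
    (hw : Summable (badDensity ν)) {s : Finset ℕ} (hs : ∀ p ∈ s, p.Prime) {K : ℕ} (hK : 1 ≤ K) :
    Real.exp (-(2 * ∑' p, badDensity ν p)) ≤ ∏ p ∈ s, localDensity ν p K :=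
  calc Real.exp (-(2 * ∑' p, badDensity ν p))
      ≤ Real.exp (-(2 * ∑ p ∈ s, badDensity ν p)) := by
        gcongr
        exact hw.sum_le_tsum s fun p _ => badDensity_nonneg ν p
    _ = ∏ p ∈ s, Real.exp (-(2 * badDensity ν p)) := by
        rw [← Real.exp_sum, Finset.mul_sum, Finset.sum_neg_distrib]
    _ ≤ ∏ p ∈ s, localDensity ν p K :=
        Finset.prod_le_prod (fun p _ => (Real.exp_pos _).le) fun p hp =>
          (Real.exp_neg_two_mul_le_one_sub (badDensity_nonneg ν p) (badDensity_le_half ν p)).trans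
            (hν.one_sub_badDensity_le_localDensity (hs p hp) hK)

variable [NoZeroDivisors R]

theorem IsMultiplicative.map_ne_zero_iff (hν : ν.IsMultiplicative) {n : ℕ} (hn : n ≠ 0) :
    ν n ≠ 0 ↔ ∀ p, p.Prime → ν (p ^ n.factorization p) ≠ 0 := by
  rw [hν.multiplicative_factorization ν hn, Finsupp.prod_ne_zero_iff]
  refine ⟨fun h p hp => ?_, fun h p hp => h p (Nat.prime_of_mem_primeFactors hp)⟩
  by_cases hpn : p ∈ n.factorization.support
  · exact h p hpn
  · rw [Finsupp.notMem_support_iff.mp hpn, pow_zero, hν.map_one]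
    exact one_ne_zero

theorem IsMultiplicative.inLocalSupport (hν : ν.IsMultiplicative) {p n : ℕ} (hp : p.Prime)
    (hn : ν n ≠ 0) (K : ℕ) : InLocalSupport ν p K n := by
  have hn0 : n ≠ 0 := by rintro rfl; exact hn ν.map_zero
  intro k _ hdvd hndvd
  have hk : n.factorization p = k :=
    le_antisymm (not_lt.mp fun h => hndvd ((hp.pow_dvd_iff_le_factorization hn0).mpr h))
      ((hp.pow_dvd_iff_le_factorization hn0).mp hdvd)
  exact hk ▸ (hν.map_ne_zero_iff hn0).mp hn p hp

theorem IsMultiplicative.exists_prime_dvd_of_sifted (hν : ν.IsMultiplicative) {x K n : ℕ}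
    (hn : n ≠ 0) (h0 : ν n = 0) (hloc : ∀ p ∈ Nat.primesBelow x, InLocalSupport ν p K n) :
    ∃ p, p.Prime ∧ p ∣ n ∧ (p < x ∧ p ^ (K + 1) ∣ n ∨ x ≤ p ∧ badModulus ν p ∣ n) := by
  obtain ⟨p, hp, hpz⟩ : ∃ p, p.Prime ∧ ν (p ^ n.factorization p) = 0 := by
    by_contra! h
    exact (hν.map_ne_zero_iff hn).mpr h h0
  have hpn : p ∣ n := by
    by_contra h
    rw [Nat.factorization_eq_zero_of_not_dvd h, pow_zero, hν.map_one] at hpz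
    exact one_ne_zero hpz
  refine ⟨p, hp, hpn, ?_⟩
  rcases lt_or_ge p x with hpx | hpx
  · refine Or.inl ⟨hpx, (hp.pow_dvd_iff_le_factorization hn).mpr ?_⟩
    by_contra! hle
    exact hloc p (Nat.mem_primesBelow.mpr ⟨hpx, hp⟩) _ (by omega) (Nat.ordProj_dvd n p)
      (Nat.pow_succ_factorization_not_dvd hn hp) hpz
  · exact Or.inr ⟨hpx, hν.badModulus_dvd hpz (Nat.ordProj_dvd n p)⟩

theorem IsMultiplicative.summable_of_hasDensity (hν : ν.IsMultiplicative) {d : ℝ} (hd : 0 < d)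
    (hdens : HasDensity {n | ν n ≠ 0} d) :
    Summable fun p : {p : ℕ // p.Prime ∧ ν p = 0} => (1 : ℝ) / (p : ℕ) := by
  refine summable_of_sum_le (c := -2 * Real.log d) (fun _ => by positivity) fun t => ?_
  set F := t.map (Function.Embedding.subtype _)
  have hF : ∀ p ∈ F, p.Prime ∧ ν p = 0 := by
    simp only [F, Finset.mem_map, Function.Embedding.subtype_apply]
    rintro _ ⟨p, -, rfl⟩
    exact p.2
  have hsifted : d ≤ ∏ p ∈ F, localDensity ν p 1 :=
    hdens.le_of_subset (hasDensity_sifted ν (fun p hp => (hF p hp).1) 1)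
      fun n hn p hp => hν.inLocalSupport (hF p hp).1 hn 1
  have hprod : ∏ p ∈ F, localDensity ν p 1 ≤ Real.exp (-∑ p ∈ F, 1 / (2 * p : ℝ)) := by
    rw [← Finset.sum_neg_distrib, Real.exp_sum]
    refine Finset.prod_le_prod (fun p _ => by unfold localDensity; positivity) fun p hp => ?_
    exact (localDensity_one_le ν (hF p hp).1 (hF p hp).2).trans (Real.one_sub_le_exp_neg _)
  have hlog : Real.log d ≤ -∑ p ∈ F, 1 / (2 * p : ℝ) :=
    (Real.log_le_iff_le_exp hd).mpr (hsifted.trans hprod)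
  have hsum : ∑ p ∈ F, 1 / (2 * p : ℝ) = (∑ p ∈ t, (1 : ℝ) / (p : ℕ)) / 2 := by
    rw [Finset.sum_map, Finset.sum_div]
    refine Finset.sum_congr rfl fun p _ => ?_
    simp only [Function.Embedding.subtype_apply]
    ring
  linarith

/-- An element of the sifted set outside the support is a multiple of `p ^ (K + 1)` for some
prime `p < x`, or of `badModulus ν p` for some prime `p ≥ x`. -/
theorem IsMultiplicative.cnt_sifted_diff_support_le (hν : ν.IsMultiplicative)
    (hw : Summable (badDensity ν)) (x K N : ℕ) :
    (cnt ({n | ∀ p ∈ Nat.primesBelow x, InLocalSupport ν p K n} \ {n | ν n ≠ 0}) N : ℝ) ≤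
      N * (x * (1 / 2) ^ (K + 1) +
        (∑' p, badDensity ν p - ∑ p ∈ Finset.range x, badDensity ν p)) := by
  set d : ℕ → ℕ := fun p => if p < x then p ^ (K + 1) else badModulus ν p
  have hcover : ∀ n ∈ {n | ∀ p ∈ Nat.primesBelow x, InLocalSupport ν p K n} \ {n | ν n ≠ 0},
      1 ≤ n → n ≤ N → ∃ p ∈ Nat.primesBelow (N + 1), d p ∣ n := by
    rintro n ⟨hloc, h0⟩ h1 hN
    obtain ⟨p, hp, hpn, h⟩ := hν.exists_prime_dvd_of_sifted (by omega) (not_not.mp h0) hloc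
    refine ⟨p, Nat.mem_primesBelow.mpr ⟨by have := Nat.le_of_dvd h1 hpn; omega, hp⟩, ?_⟩
    rcases h with ⟨hpx, h⟩ | ⟨hpx, h⟩
    · simpa [d, hpx] using h
    · simpa [d, not_lt.mpr hpx] using h
  have hsmall : ∑ p ∈ (Nat.primesBelow (N + 1)).filter (· < x), (1 : ℝ) / d p ≤
      x * (1 / 2) ^ (K + 1) := by
    refine le_trans (le_of_eq (Finset.sum_congr rfl fun p hp => ?_))
      (sum_one_div_pow_le_of_subset_Ico (fun p hp => ?_) (K + 1))
    · simp [d, (Finset.mem_filter.mp hp).2]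
    · simp only [Finset.mem_filter, Nat.mem_primesBelow] at hp
      exact Finset.mem_Ico.mpr ⟨hp.1.2.two_le, hp.2⟩
  have hlarge : ∑ p ∈ (Nat.primesBelow (N + 1)).filter (¬· < x), (1 : ℝ) / d p ≤
      ∑' p, badDensity ν p - ∑ p ∈ Finset.range x, badDensity ν p := by
    refine le_trans (le_of_eq (Finset.sum_congr rfl fun p hp => ?_))
      (sum_le_tsum_sub_sum_range hw (badDensity_nonneg ν) fun p hp =>
        not_lt.mp (Finset.mem_filter.mp hp).2)
    simp only [Finset.mem_filter, Nat.mem_primesBelow] at hp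
    simp [d, badDensity, hp.2, hp.1.2]
  calc _ ≤ N * ∑ p ∈ Nat.primesBelow (N + 1), (1 : ℝ) / d p :=
        cnt_le_of_forall_exists_dvd _ N _ d hcover
    _ ≤ _ := by
        rw [← Finset.sum_filter_add_sum_filter_not _ (· < x)]
        gcongr

theorem IsMultiplicative.exists_approx_cnt_support (hν : ν.IsMultiplicative)
    (hw : Summable (badDensity ν)) {ε : ℝ} (hε : 0 < ε) :
    ∃ ρ, Real.exp (-(2 * ∑' p, badDensity ν p)) ≤ ρ ∧
      ∀ᶠ N : ℕ in atTop, |(cnt {n | ν n ≠ 0} N : ℝ) / N - ρ| ≤ ε := by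
  obtain ⟨x, hx⟩ : ∃ x, ∑' p, badDensity ν p - ∑ p ∈ Finset.range x, badDensity ν p < ε / 4 :=
    (hw.hasSum.tendsto_sum_nat.eventually
      (lt_mem_nhds (sub_lt_self _ (by positivity : (0 : ℝ) < ε / 4)))).exists.imp
      fun x hx => by linarith
  have hpow : Tendsto (fun K : ℕ => (x : ℝ) * (1 / 2) ^ (K + 1)) atTop (𝓝 0) := by
    simpa using ((tendsto_pow_atTop_nhds_zero_of_lt_one (r := (1 / 2 : ℝ)) (by norm_num)
      (by norm_num)).comp (tendsto_add_atTop_nat 1)).const_mul (x : ℝ)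
  obtain ⟨K, hK, hKx⟩ := ((eventually_ge_atTop 1).and
    (hpow.eventually (gt_mem_nhds (by positivity : (0 : ℝ) < ε / 4)))).exists
  have hs : ∀ p ∈ Nat.primesBelow x, p.Prime := fun p hp => Nat.prime_of_mem_primesBelow hp
  set P := {n | ∀ p ∈ Nat.primesBelow x, InLocalSupport ν p K n}
  refine ⟨∏ p ∈ Nat.primesBelow x, localDensity ν p K, hν.exp_le_prod_localDensity hw hs hK, ?_⟩
  filter_upwards [(hasDensity_sifted ν hs K).eventually
    (Metric.closedBall_mem_nhds _ (half_pos hε)), eventually_gt_atTop 0] with N hP hN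
  have hN' : (0 : ℝ) < N := by exact_mod_cast hN
  have hsub : (cnt {n | ν n ≠ 0} N : ℝ) ≤ cnt P N := by
    exact_mod_cast cnt_mono (fun n hn p hp => hν.inLocalSupport (hs p hp) hn K) N
  have hsup : (cnt P N : ℝ) ≤ cnt {n | ν n ≠ 0} N + ε / 2 * N := by
    have hsplit : (cnt P N : ℝ) ≤ cnt {n | ν n ≠ 0} N + cnt (P \ {n | ν n ≠ 0}) N := by
      exact_mod_cast cnt_le_cnt_add_cnt_diff {n | ν n ≠ 0} P N
    nlinarith [hν.cnt_sifted_diff_support_le hw x K N]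
  rw [Real.dist_eq, abs_le] at hP
  have h1 : (cnt {n | ν n ≠ 0} N : ℝ) / N ≤ cnt P N / N := by gcongr
  have h2 : (cnt P N : ℝ) / N ≤ cnt {n | ν n ≠ 0} N / N + ε / 2 := by
    rw [div_le_iff₀ hN', add_mul, div_mul_cancel₀ _ hN'.ne']
    exact hsup
  rw [abs_le]
  constructor <;> linarith [hP.1, hP.2]

theorem IsMultiplicative.exists_hasDensity_of_summable (hν : ν.IsMultiplicative)
    (hsum : Summable fun p : {p : ℕ // p.Prime ∧ ν p = 0} => (1 : ℝ) / (p : ℕ)) :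
    ∃ d : ℝ, 0 < d ∧ HasDensity {n | ν n ≠ 0} d := by
  obtain ⟨d, hd, hlim⟩ := exists_tendsto_of_forall_approx _ _
    fun ε hε => hν.exists_approx_cnt_support (summable_badDensity ν hsum) hε
  exact ⟨d, (Real.exp_pos _).trans_le hd, hlim⟩

end Multiplicative

end ArithmeticFunction

theorem support_positive_density_iff
    (ν : ArithmeticFunction ℂ) (hν : ν.IsMultiplicative) :
    (∃ d : ℝ, 0 < d ∧ HasDensity {n : ℕ | ν n ≠ 0} d) ↔
      Summable (fun p : {p : ℕ // p.Prime ∧ ν p = 0} => (1 : ℝ) / (p : ℕ)) :=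
  ⟨fun ⟨_, hd, hdens⟩ => hν.summable_of_hasDensity hd hdens, hν.exists_hasDensity_of_summable⟩
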